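/- Let b ≥ 2 and c ≥ 2. In T_{b+c}, under the identification of T_a ⊗ T_{a'} with T_{a+a'} by concatenation, one has Φ_b(Θ_b ⊗ Θ_c) = q · (Θ_b ⊗ Θ_c) + Θ_{b+1} ⊗ Θ_{c−1} + Θ_{b−1} ⊗ Θ_{c+1}. (A crossing applied at the junction of two adjacent blocks.) -/

import Mathlib

open scoped BigOperators

set_option maxHeartbeats 1000000
set_option synthInstance.maxHeartbeats 400000

noncomputable section

/-- The ground field `K = ℂ(q)`. -/
abbrev K : Type := RatFunc ℂ

/-- The variable `q` of `K = ℂ(q)`. -/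
def q : K := RatFunc.X

/-- `T n` models the `n`-th tensor power of the vector representation of
`U_q(gl(1|1))`, as functions on binary strings of length `n`. -/
abbrev T (n : ℕ) : Type := (Fin n → Fin 2) → K

/-- The standard basis vector `v_α` of `T n`. -/
def v (n : ℕ) (α : Fin n → Fin 2) : T n := fun β => if β = α then 1 else 0

/-- `v₀^{⊗ n}`, the basis vector of the all-zeroes string. -/
def v0 (n : ℕ) : T n := v n (fun _ => 0)

/-- `w n i` is the basis vector whose string has a single `1` in (1-indexed) position `i`. -/
def w (n i : ℕ) : T n := v n (fun j => if (j : ℕ) + 1 = i then 1 else 0)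

/-- `e i = -w_i + q⁻¹ w_{i+1}`. -/
def e (n i : ℕ) : T n := -(w n i) + q⁻¹ • w n (i + 1)

/-- The `R`-matrix on a pair of strands: entry `Rmat out inp`. -/
def Rmat : Fin 2 × Fin 2 → Fin 2 × Fin 2 → K := fun out inp =>
  if inp = (0, 0) then (if out = (0, 0) then q else 0)
  else if inp = (1, 0) then (if out = (0, 1) then 1 else 0)
  else if inp = (0, 1) then
    (if out = (1, 0) then 1 else if out = (0, 1) then q - q⁻¹ else 0)
  else (if out = (1, 1) then -q⁻¹ else 0)

/-- The `R`-matrix acting at positions `i`, `j` (0-indexed) of `T n`. -/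
def PhiAux (n : ℕ) (i j : Fin n) : T n →ₗ[K] T n where
  toFun f := fun β => ∑ p : Fin 2 × Fin 2,
    Rmat (β i, β j) p * f (Function.update (Function.update β i p.1) j p.2)
  map_add' f g := by
    funext β
    try dsimp only
    simp only [Pi.add_apply]
    rw [← Finset.sum_add_distrib]
    exact Finset.sum_congr rfl fun p _ => by simp [mul_add]
  map_smul' c f := by
    funext β
    try dsimp only
    simp only [Pi.smul_apply, smul_eq_mul, RingHom.id_apply]
    rw [Finset.mul_sum]
    exact Finset.sum_congr rfl fun p _ => by ring

/-- `Phi n t` is the map induced by the braid generator `σ_t` (with `1 ≤ t ≤ n-1`),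
acting through the `R`-matrix at (1-indexed) positions `(t, t+1)`. -/
def Phi (n t : ℕ) : T n →ₗ[K] T n :=
  if h : 0 < t ∧ t < n then PhiAux n ⟨t - 1, by omega⟩ ⟨t, h.2⟩ else 0

/-- The action of `E` on `T n`. -/
def En (n : ℕ) : T n →ₗ[K] T n where
  toFun f := fun β => ∑ i : Fin n,
    if β i = 0 then
      ((-1 : K) ^ (Finset.univ.filter (fun j : Fin n => j < i ∧ β j = 1)).card
        * q⁻¹ ^ (n - 1 - (i : ℕ))) * f (Function.update β i 1)
    else 0
  map_add' f g := by
    funext β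
    try dsimp only
    simp only [Pi.add_apply]
    rw [← Finset.sum_add_distrib]
    refine Finset.sum_congr rfl fun i _ => ?_
    by_cases h : β i = 0 <;> simp [h, mul_add]
  map_smul' c f := by
    funext β
    try dsimp only
    simp only [Pi.smul_apply, smul_eq_mul, RingHom.id_apply]
    rw [Finset.mul_sum]
    refine Finset.sum_congr rfl fun i _ => ?_
    by_cases h : β i = 0 <;> simp [h] <;> ring

/-- The action of `F` on `T n`. -/
def Fn (n : ℕ) : T n →ₗ[K] T n where
  toFun f := fun β => ∑ i : Fin n,
    if β i = 1 then
      ((-1 : K) ^ (Finset.univ.filter (fun j : Fin n => j < i ∧ β j = 1)).card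
        * q ^ (i : ℕ)) * f (Function.update β i 0)
    else 0
  map_add' f g := by
    funext β
    try dsimp only
    simp only [Pi.add_apply]
    rw [← Finset.sum_add_distrib]
    refine Finset.sum_congr rfl fun i _ => ?_
    by_cases h : β i = 1 <;> simp [h, mul_add]
  map_smul' c f := by
    funext β
    try dsimp only
    simp only [Pi.smul_apply, smul_eq_mul, RingHom.id_apply]
    rw [Finset.mul_sum]
    refine Finset.sum_congr rfl fun i _ => ?_
    by_cases h : β i = 1 <;> simp [h] <;> ring

/-- The number of `1`s in a binary string. -/
def wt {n : ℕ} (α : Fin n → Fin 2) : ℕ := (Finset.univ.filter (fun i => α i = 1)).card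

/-- `Tk n k` is the span of the basis vectors with exactly `k` entries equal to `1`. -/
def Tk (n k : ℕ) : Submodule K (T n) :=
  Submodule.span K {f : T n | ∃ α, wt α = k ∧ f = v n α}

/-- `Hk n k` is the space of highest weight vectors of weight `(n-k)ε₁ + kε₂`. -/
def Hk (n k : ℕ) : Submodule K (T n) := LinearMap.ker (En n) ⊓ Tk n k

/-- The bilinear product `m` on `T n`. -/
def mul2 (n : ℕ) (f g : T n) : T n := fun γ =>
  ∑ α : Fin n → Fin 2,
    if (∀ i, α i = 1 → γ i = 1) then
      ((-1 : K) ^ (∑ p ∈ Finset.univ.filter (fun p : Fin n × Fin n => p.1 < p.2),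
          (((fun i => if α i = 1 then 0 else γ i) p.1 : Fin 2) : ℕ) * ((α p.2 : Fin 2) : ℕ)))
        * f α * g (fun i => if α i = 1 then 0 else γ i)
    else 0

/-- The left-iterated product `Ψ(u_1, …, u_k) = m(…m(m(u_1,u_2),u_3)…,u_k)`. -/
def Psi (n : ℕ) : (k : ℕ) → (Fin k → T n) → T n
  | 0, _ => v0 n
  | 1, u => u 0
  | (k + 2), u => mul2 n (Psi n (k + 1) (fun i => u i.castSucc)) (u (Fin.last (k + 1)))

/-- Concatenation (tensor product) `T a ⊗ T b → T (a + b)`. -/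
def conc {a b : ℕ} (f : T a) (g : T b) : T (a + b) := fun γ =>
  f (fun i => γ (Fin.castAdd b i)) * g (fun i => γ (Fin.natAdd a i))

/-- Identification `T a ≃ T b` for `a = b`. -/
def castT {a b : ℕ} (h : a = b) (f : T a) : T b := fun γ => f (fun i => γ (Fin.cast h i))

/-- The block vector `Θ_b = Σ_{r=0}^{b-1} (-1)^r q^{-(b-1-r)} v_{β(r)}`. -/
def Theta (b : ℕ) : T b :=
  ∑ r : Fin b, ((-1 : K) ^ (r : ℕ) * q⁻¹ ^ (b - 1 - (r : ℕ))) •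
    v b (fun i => if i = r then 0 else 1)

/-- The map induced by the braid `λ = σ_{n-1} ⋯ σ_1`. -/
def Lam (n : ℕ) : T n →ₗ[K] T n :=
  ((List.range (n - 1)).map (fun t => Phi n (t + 1))).foldl (fun acc g => g ∘ₗ acc) LinearMap.id

/-- The Vandermonde-type matrix `B(n)`. -/
def B (n : ℕ) : Matrix (Fin n) (Fin n) K :=
  fun i j => q ^ ((i : ℤ) * (n : ℤ) * ((n : ℤ) - 1 - 2 * (j : ℤ)))

/-- `C(n) = B(n)⁻¹`. -/
def Cmat (n : ℕ) : Matrix (Fin n) (Fin n) K := (B n)⁻¹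

/-- A combinatorial string `(a_1, b_1, a_2, b_2, …, b_l, a_{l+1})`. -/
structure GString where
  l : ℕ
  a : Fin (l + 1) → ℕ
  b : Fin l → ℕ

/-- Membership of a string in `S_k` (for strands number `n`). -/
def memSk (n k : ℕ) (s : GString) : Prop :=
  (∀ i, 2 ≤ s.b i) ∧ (∑ i, (s.b i - 1)) = k ∧ ((∑ i, s.a i) + ∑ i, s.b i) = n

/-- The length of the string, computed blockwise. -/
def lenOf : (l : ℕ) → (Fin (l + 1) → ℕ) → (Fin l → ℕ) → ℕ
  | 0, a, _ => a 0
  | (l + 1), a, b => (a 0 + b 0) + lenOf l (fun i => a i.succ) (fun i => b i.succ)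

/-- The concatenation `v₀^{⊗a_1} ⊗ Θ_{b_1} ⊗ ⋯ ⊗ Θ_{b_l} ⊗ v₀^{⊗a_{l+1}}`. -/
def rawphi : (l : ℕ) → (a : Fin (l + 1) → ℕ) → (b : Fin l → ℕ) → T (lenOf l a b)
  | 0, a, _ => v0 (a 0)
  | (l + 1), a, b =>
      conc (conc (v0 (a 0)) (Theta (b 0)))
        (rawphi l (fun i => a i.succ) (fun i => b i.succ))

/-- `φ(s) ∈ T n`, the vector associated to a string `s`. -/
def phi (n : ℕ) (s : GString) : T n :=
  if h : lenOf s.l s.a s.b = n then castT h (rawphi s.l s.a s.b) else 0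

/-!
Write `v_{x,y}` for the basis vector whose string has its two zeros at the 0-indexed positions
`x < y`. Since the coefficients of `Θ_a` factor as `(-1)^r q^{-(a-1-r)} = (-q)^r q^{-(a-1)}`,
the vector `Θ_a ⊗ Θ_{n-a}` is, up to the scalar `(-q⁻¹)^a q^{-(n-2)}`, the sum
`S_a = ∑_{x < a ≤ y < n} (-q)^{x+y} v_{x,y}`, whose coefficients do not depend on `a`.
The crossing `Φ_b` acts on the positions `b-1, b`. Splitting `S_b` according to `x = b-1` or not
and `y = b` or not gives four blocks, on each of which `Φ_b` acts through a single column of the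
`R`-matrix; `S_{b+1}` and `S_{b-1}` are sums of these blocks and of the two new blocks that `Φ_b`
produces. The identity `Φ_b S_b = q S_b - q⁻¹ S_{b+1} - q S_{b-1}` is then a comparison of coefficients.
-/

open Finset

lemma q_ne_zero : q ≠ 0 := RatFunc.X_ne_zero

lemma update_update_eq_iff {ι β : Type*} [DecidableEq ι] {i j : ι} (hij : i ≠ j)
    (f g : ι → β) (a b : β) :
    Function.update (Function.update f i a) j b = g
      ↔ (a, b) = (g i, g j) ∧ ∀ k, k ≠ i → k ≠ j → f k = g k := by
  constructor
  · rintro rfl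
    exact ⟨by simp [Function.update_of_ne hij], fun k hi hj => by simp [hi, hj]⟩
  · rintro ⟨hab, h⟩
    obtain ⟨rfl, rfl⟩ := Prod.mk.inj hab
    funext k
    by_cases hj : k = j
    · subst hj; simp
    by_cases hi : k = i
    · subst hi; simp [hij]
    simp [hi, hj, h k hi hj]

section PhiAux

variable {n : ℕ} {i j : Fin n} {α : Fin n → Fin 2}

lemma PhiAux_v (hij : i ≠ j) :
    PhiAux n i j (v n α) = ∑ p : Fin 2 × Fin 2,
      Rmat p (α i, α j) • v n (Function.update (Function.update α i p.1) j p.2) := by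
  funext β
  simp only [PhiAux, LinearMap.coe_mk, AddHom.coe_mk, Finset.sum_apply, Pi.smul_apply,
    smul_eq_mul, v, update_update_eq_iff hij, eq_comm (a := β)]
  simp only [ite_and, mul_ite, mul_one, mul_zero, sum_ite_eq', mem_univ, if_true]
  exact if_congr (forall₃_congr fun _ _ _ => eq_comm) rfl rfl

lemma PhiAux_v_of_zero_zero (hij : i ≠ j) (hi : α i = 0) (hj : α j = 0) :
    PhiAux n i j (v n α) = q • v n α := by
  have hα := (update_update_eq_iff hij α α _ _).2 ⟨by rw [hi, hj], fun _ _ _ => rfl⟩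
  rw [PhiAux_v hij, hi, hj, Fintype.sum_prod_type]
  simp [Fin.sum_univ_two, Rmat, hα]

lemma PhiAux_v_of_one_one (hij : i ≠ j) (hi : α i = 1) (hj : α j = 1) :
    PhiAux n i j (v n α) = -q⁻¹ • v n α := by
  have hα := (update_update_eq_iff hij α α _ _).2 ⟨by rw [hi, hj], fun _ _ _ => rfl⟩
  rw [PhiAux_v hij, hi, hj, Fintype.sum_prod_type]
  simp [Fin.sum_univ_two, Rmat, hα]

lemma PhiAux_v_of_one_zero (hij : i ≠ j) (hi : α i = 1) (hj : α j = 0) :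
    PhiAux n i j (v n α) = v n (α ∘ Equiv.swap i j) := by
  rw [PhiAux_v hij, Equiv.comp_swap_eq_update, hi, hj, Fintype.sum_prod_type,
    Function.update_comm hij.symm]
  simp [Fin.sum_univ_two, Rmat]

lemma PhiAux_v_of_zero_one (hij : i ≠ j) (hi : α i = 0) (hj : α j = 1) :
    PhiAux n i j (v n α) = (q - q⁻¹) • v n α + v n (α ∘ Equiv.swap i j) := by
  have hα := (update_update_eq_iff hij α α _ _).2 ⟨by rw [hi, hj], fun _ _ _ => rfl⟩
  rw [PhiAux_v hij, Equiv.comp_swap_eq_update, hi, hj, Fintype.sum_prod_type,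
    Function.update_comm hij.symm]
  simp [Fin.sum_univ_two, Rmat, hα]

end PhiAux

lemma Phi_succ_eq_PhiAux {m n : ℕ} (h : m + 1 < n) :
    Phi n (m + 1) = PhiAux n ⟨m, by omega⟩ ⟨m + 1, h⟩ := by
  rw [Phi, dif_pos ⟨m.succ_pos, h⟩]
  rfl

lemma conc_v {a b : ℕ} (α : Fin a → Fin 2) (β : Fin b → Fin 2) :
    conc (v a α) (v b β) = v (a + b) (Fin.append α β) := by
  funext γ
  have hγ : γ = Fin.append α β
      ↔ (fun i => γ (Fin.castAdd b i)) = α ∧ (fun i => γ (Fin.natAdd a i)) = β := by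
    constructor
    · rintro rfl; simp
    · rintro ⟨rfl, rfl⟩; exact Fin.append_castAdd_natAdd.symm
  simp only [conc, v, hγ, ite_zero_mul_ite_zero, mul_one]

lemma conc_sum_smul {a b : ℕ} {ι κ : Type*} (s : Finset ι) (t : Finset κ) (c : ι → K)
    (d : κ → K) (f : ι → T a) (g : κ → T b) :
    conc (∑ i ∈ s, c i • f i) (∑ j ∈ t, d j • g j)
      = ∑ i ∈ s, ∑ j ∈ t, (c i * d j) • conc (f i) (g j) := by
  funext γ
  simp only [conc, Finset.sum_apply, Pi.smul_apply, smul_eq_mul, sum_mul_sum]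
  exact sum_congr rfl fun _ _ => sum_congr rfl fun _ _ => by ring

/-- Positions are 0-indexed, so `Phi n (m + 1)` acts on the positions `m` and `m + 1`. -/
def twoZeros (n x y : ℕ) : Fin n → Fin 2 := fun k => if (k : ℕ) = x ∨ (k : ℕ) = y then 0 else 1

lemma twoZeros_comp_swap (n x y : ℕ) (i j : Fin n) :
    twoZeros n x y ∘ Equiv.swap i j
      = twoZeros n (Equiv.swap (i : ℕ) j x) (Equiv.swap (i : ℕ) j y) := by
  funext k
  have hk : ((Equiv.swap i j k : Fin n) : ℕ) = Equiv.swap (i : ℕ) j k :=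
    (Fin.val_injective.swap_apply i j k).symm
  simp only [twoZeros, Function.comp_apply, hk, Equiv.swap_apply_eq_iff]

lemma append_eq_twoZeros {a b : ℕ} (r : Fin a) (s : Fin b) :
    Fin.append (fun i => if i = r then 0 else 1) (fun i => if i = s then 0 else 1)
      = twoZeros (a + b) r (a + s) := by
  funext k
  refine Fin.addCases (fun i => ?_) (fun i => ?_) k
  · have : (i : ℕ) ≠ a + s := by omega
    simp [twoZeros, Fin.ext_iff, this]
  · have : a + (i : ℕ) ≠ r := by omega
    simp [twoZeros, Fin.ext_iff, this]

lemma Theta_coeff_eq {b r : ℕ} (h : r < b) :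
    (-1 : K) ^ r * q⁻¹ ^ (b - 1 - r) = (-q) ^ r * q⁻¹ ^ (b - 1) := by
  obtain ⟨k, rfl⟩ := Nat.exists_eq_add_of_lt h
  rw [show r + k + 1 - 1 - r = k by omega, show r + k + 1 - 1 = r + k by omega, pow_add,
    neg_pow q, mul_assoc, ← mul_assoc (q ^ r), ← mul_pow, mul_inv_cancel₀ q_ne_zero, one_pow,
    one_mul]

def pairSum (n : ℕ) (X Y : Finset ℕ) : T n :=
  ∑ x ∈ X, ∑ y ∈ Y, (-q) ^ (x + y) • v n (twoZeros n x y)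

lemma conc_Theta_Theta (a b : ℕ) :
    conc (Theta a) (Theta b)
      = ((-q⁻¹) ^ a * q⁻¹ ^ (a + b - 2)) • pairSum (a + b) (range a) (Ico a (a + b)) := by
  simp only [Theta, conc_sum_smul, conc_v, append_eq_twoZeros, pairSum, sum_Ico_eq_sum_range,
    add_tsub_cancel_left, sum_range, smul_sum, smul_smul]
  refine sum_congr rfl fun r _ => sum_congr rfl fun s _ => ?_
  have hr := r.isLt
  have hs := s.isLt
  have hinv : (-q⁻¹) ^ a * (-q) ^ a = 1 := by
    rw [← mul_pow, neg_mul_neg, inv_mul_cancel₀ q_ne_zero, one_pow]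
  rw [Theta_coeff_eq hr, Theta_coeff_eq hs, show a + b - 2 = (a - 1) + (b - 1) by omega]
  congr 1
  linear_combination (-(q⁻¹ ^ (a - 1) * q⁻¹ ^ (b - 1) * (-q) ^ (r : ℕ) * (-q) ^ (s : ℕ))) * hinv

lemma castT_conc_Theta {a b n : ℕ} (h : a + b = n) :
    castT h (conc (Theta a) (Theta b))
      = ((-q⁻¹) ^ a * q⁻¹ ^ (n - 2)) • pairSum n (range a) (Ico a n) := by
  subst h
  exact conc_Theta_Theta a b

lemma pairSum_insert_left {n x : ℕ} {X : Finset ℕ} (hx : x ∉ X) (Y : Finset ℕ) :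
    pairSum n (insert x X) Y = pairSum n {x} Y + pairSum n X Y := by
  simp only [pairSum, sum_insert hx, sum_singleton]

lemma pairSum_insert_right {n y : ℕ} (X : Finset ℕ) {Y : Finset ℕ} (hy : y ∉ Y) :
    pairSum n X (insert y Y) = pairSum n X {y} + pairSum n X Y := by
  simp only [pairSum, sum_insert hy, sum_singleton, sum_add_distrib]

section Crossing

variable {m n : ℕ}

lemma Phi_pairSum_one_one (h : m + 1 < n) {X Y : Finset ℕ} (hX : ∀ x ∈ X, x < m)
    (hY : ∀ y ∈ Y, m + 1 < y) :
    Phi n (m + 1) (pairSum n X Y) = -q⁻¹ • pairSum n X Y := by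
  simp only [pairSum, map_sum, map_smul, smul_sum, smul_comm (-q⁻¹)]
  refine sum_congr rfl fun x hx => sum_congr rfl fun y hy => ?_
  have := hX x hx
  have := hY y hy
  rw [Phi_succ_eq_PhiAux h, PhiAux_v_of_one_one (by simp)]
  · simp [twoZeros]; omega
  · simp [twoZeros]; omega

lemma Phi_pairSum_one_zero (h : m + 1 < n) {X : Finset ℕ} (hX : ∀ x ∈ X, x < m) :
    Phi n (m + 1) (pairSum n X {m + 1}) = -q • pairSum n X {m} := by
  simp only [pairSum, sum_singleton, map_sum, map_smul, smul_sum, smul_smul]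
  refine sum_congr rfl fun x hx => ?_
  have := hX x hx
  rw [Phi_succ_eq_PhiAux h, PhiAux_v_of_one_zero (by simp), twoZeros_comp_swap,
    Equiv.swap_apply_of_ne_of_ne (by simp; omega) (by simp; omega), Equiv.swap_apply_right]
  · congr 1; ring
  · simp [twoZeros]; omega
  · simp [twoZeros]

lemma Phi_pairSum_zero_zero (h : m + 1 < n) :
    Phi n (m + 1) (pairSum n {m} {m + 1}) = q • pairSum n {m} {m + 1} := by
  simp only [pairSum, sum_singleton, map_smul, smul_comm q]
  rw [Phi_succ_eq_PhiAux h, PhiAux_v_of_zero_zero (by simp)] <;> simp [twoZeros]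

lemma Phi_pairSum_zero_one (h : m + 1 < n) {Y : Finset ℕ} (hY : ∀ y ∈ Y, m + 1 < y) :
    Phi n (m + 1) (pairSum n {m} Y)
      = (q - q⁻¹) • pairSum n {m} Y - q⁻¹ • pairSum n {m + 1} Y := by
  simp only [pairSum, sum_singleton, map_sum, map_smul, smul_sum, ← sum_sub_distrib]
  refine sum_congr rfl fun y hy => ?_
  have := hY y hy
  rw [Phi_succ_eq_PhiAux h, PhiAux_v_of_zero_one (by simp), twoZeros_comp_swap,
    Equiv.swap_apply_left, Equiv.swap_apply_of_ne_of_ne (by simp; omega) (by simp; omega)]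
  · have hpow : -q⁻¹ * (-q) ^ (m + 1 + y) = (-q) ^ (m + y) := by
      rw [add_right_comm, pow_succ', ← mul_assoc, neg_mul_neg, inv_mul_cancel₀ q_ne_zero,
        one_mul]
    funext β
    simp only [Pi.add_apply, Pi.sub_apply, Pi.smul_apply, smul_eq_mul]
    linear_combination (-v n (twoZeros n (m + 1) y) β) * hpow
  · simp [twoZeros]
  · simp [twoZeros]; omega

lemma Phi_pairSum_range_Ico (h : m + 1 < n) :
    Phi n (m + 1) (pairSum n (range (m + 1)) (Ico (m + 1) n))
      = q • pairSum n (range (m + 1)) (Ico (m + 1) n)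
        - q⁻¹ • pairSum n (range (m + 1 + 1)) (Ico (m + 1 + 1) n)
        - q • pairSum n (range m) (Ico m n) := by
  have hX : ∀ x ∈ range m, x < m := fun x hx => mem_range.1 hx
  have hY : ∀ y ∈ Ico (m + 1 + 1) n, m + 1 < y := fun y hy => (mem_Ico.1 hy).1
  have hm : m ∉ range m := by simp
  have hm' : m ∉ insert (m + 1) (Ico (m + 1 + 1) n) := by simp
  have hm1 : m + 1 ∉ insert m (range m) := by simp
  have hm1' : m + 1 ∉ Ico (m + 1 + 1) n := by simp
  rw [← insert_Ico_add_one_left_eq_Ico (a := m) (by omega), ← insert_Ico_add_one_left_eq_Ico h,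
    range_add_one (n := m + 1), range_add_one (n := m)]
  simp only [pairSum_insert_left, pairSum_insert_right, hm, hm', hm1, hm1', not_false_eq_true,
    map_add, Phi_pairSum_one_one h hX hY, Phi_pairSum_one_zero h hX, Phi_pairSum_zero_zero h,
    Phi_pairSum_zero_one h hY]
  funext β
  simp only [Pi.add_apply, Pi.sub_apply, Pi.smul_apply, smul_eq_mul]
  ring

end Crossing

theorem stmt17 (b c : ℕ) (hb : 2 ≤ b) (hc : 2 ≤ c) :
    Phi (b + c) b (conc (Theta b) (Theta c))
      = q • conc (Theta b) (Theta c)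
        + castT (by omega : (b + 1) + (c - 1) = b + c) (conc (Theta (b + 1)) (Theta (c - 1)))
        + castT (by omega : (b - 1) + (c + 1) = b + c) (conc (Theta (b - 1)) (Theta (c + 1))) := by
  obtain ⟨m, rfl⟩ : ∃ m, b = m + 1 := ⟨b - 1, by omega⟩
  rw [castT_conc_Theta, castT_conc_Theta, conc_Theta_Theta, map_smul,
    Phi_pairSum_range_Ico (by omega), Nat.add_sub_cancel]
  funext β
  simp only [Pi.add_apply, Pi.sub_apply, Pi.smul_apply, smul_eq_mul]
  linear_combination ((-q⁻¹) ^ m * q⁻¹ ^ (m + 1 + c - 2)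
    * pairSum (m + 1 + c) (range m) (Ico m (m + 1 + c)) β) * mul_inv_cancel₀ q_ne_zero
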